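/- Let X and Y be n×n Hermitian complex matrices such that X ≤ (U Y Uᴴ + V Y Vᴴ)/2 in the Loewner order for some n×n unitary matrices U and V. Then for every k = 1, 2, …, n, the sum of the k largest eigenvalues of X is at most the sum of the k largest eigenvalues of Y: ∑_{j=1}^k λ_j(X) ≤ ∑_{j=1}^k λ_j(Y). -/

import Mathlib

open Matrix
open scoped ComplexOrder

/-- The `j`-th largest eigenvalue of a Hermitian matrix (`0`-indexed, so `eigDesc hA ⟨0, _⟩`
is the largest), counted with multiplicity. -/
noncomputable def eigDesc {n : ℕ} {A : Matrix (Fin n) (Fin n) ℂ} (hA : A.IsHermitian)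
    (j : Fin n) : ℝ :=
  hA.eigenvalues (Tuple.sort hA.eigenvalues j.rev)

lemma isHermitian_cfc {n : ℕ} {A : Matrix (Fin n) (Fin n) ℂ} (hA : A.IsHermitian)
    (f : ℝ → ℝ) : (hA.cfc f).IsHermitian := by
  rw [← hA.cfc_eq]
  exact cfc_predicate f A

lemma isHermitian_half_smul {n : ℕ} {X : Matrix (Fin n) (Fin n) ℂ} (hX : X.IsHermitian) :
    ((2 : ℝ)⁻¹ • X).IsHermitian := by
  show _ = _
  rw [Matrix.conjTranspose_smul, star_trivial, hX.eq]

lemma isHermitian_sum_conj {m n : ℕ} {A : Fin m → Matrix (Fin n) (Fin n) ℂ}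
    (Z : Fin m → Matrix (Fin n) (Fin n) ℂ) (hA : ∀ i, (A i).IsHermitian) :
    (∑ i, (Z i)ᴴ * A i * Z i).IsHermitian := by
  show _ = _
  rw [Matrix.conjTranspose_sum]
  exact Finset.sum_congr rfl fun i _ => (isHermitian_conjTranspose_mul_mul (Z i) (hA i)).eq

/-!
Ky Fan's maximum principle: for a Hermitian `Y` and any orthonormal family `u₁, …, u_k`,
`∑ⱼ re ⟪uⱼ, Y uⱼ⟫` is at most the sum of the `k` largest eigenvalues of `Y`, with equality when
the `uⱼ` are the corresponding eigenvectors. In an orthonormal eigenbasis `bᵢ` of `Y` the left side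
is `∑ᵢ λᵢ sᵢ` with `sᵢ = ∑ⱼ |⟪bᵢ, uⱼ⟫|²`; by Bessel `sᵢ ≤ 1` and by Parseval `∑ᵢ sᵢ = k`, and such
weights do best when concentrated on the `k` largest `λᵢ`.

Now let `wⱼ` be eigenvectors of `X` for its `k` largest eigenvalues. The Loewner hypothesis gives
`∑ⱼ λⱼ(X) = ∑ⱼ ⟪wⱼ, X wⱼ⟫ ≤ ½ ∑ⱼ ⟪U⋆wⱼ, Y U⋆wⱼ⟫ + ½ ∑ⱼ ⟪V⋆wⱼ, Y V⋆wⱼ⟫`, and the families `U⋆wⱼ`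
and `V⋆wⱼ` are again orthonormal, so each half is at most `½ ∑ⱼ λⱼ(Y)`.
-/

open Finset RCLike
open scoped InnerProductSpace

theorem sum_mul_le_sum_of_sum_eq_card {ι : Type*} [Fintype ι] {lam s : ι → ℝ}
    {S : Finset ι} (hs0 : ∀ i, 0 ≤ s i) (hs1 : ∀ i, s i ≤ 1) (hsum : ∑ i, s i = #S)
    (hS : ∀ i ∈ S, ∀ i' ∉ S, lam i' ≤ lam i) :
    ∑ i, lam i * s i ≤ ∑ i ∈ S, lam i := by
  classical
  obtain ⟨t, htS, hSt⟩ : ∃ t, (∀ i ∈ S, t ≤ lam i) ∧ ∀ i' ∉ S, lam i' ≤ t := by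
    rcases S.eq_empty_or_nonempty with rfl | hne
    · exact ⟨∑ i, |lam i|, by simp, fun i' _ =>
        (le_abs_self _).trans (single_le_sum (fun i _ => abs_nonneg (lam i)) (mem_univ i'))⟩
    · obtain ⟨i, hi, hmin⟩ := S.exists_min_image lam hne
      exact ⟨lam i, hmin, hS i hi⟩
  -- against a threshold `t` separating `S` from its complement, every term below is `≤ 0`
  set χ : ι → ℝ := fun i => if i ∈ S then 1 else 0
  have hterm : ∀ i, (lam i - t) * (s i - χ i) ≤ 0 := by
    intro i
    by_cases hi : i ∈ S
    · exact mul_nonpos_of_nonneg_of_nonpos (by linarith [htS i hi]) (by simp [χ, hi, hs1 i])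
    · exact mul_nonpos_of_nonpos_of_nonneg (by linarith [hSt i hi]) (by simp [χ, hi, hs0 i])
  have hχ : ∑ i, χ i = #S := by simp [χ]
  have hlamχ : ∑ i, lam i * χ i = ∑ i ∈ S, lam i := by simp [χ]
  calc ∑ i, lam i * s i
      = ∑ i, (lam i - t) * (s i - χ i) + ∑ i, lam i * χ i + t * (∑ i, s i - ∑ i, χ i) := by
        simp only [mul_sub, sub_mul, sum_sub_distrib, mul_sum]; ring
    _ ≤ ∑ i ∈ S, lam i := by
        rw [hlamχ, hsum, hχ, sub_self, mul_zero]
        linarith [sum_nonpos fun i (_ : i ∈ univ) => hterm i]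

section
variable {𝕜 E ι : Type*} [RCLike 𝕜] [NormedAddCommGroup E] [InnerProductSpace 𝕜 E] [Fintype ι]
  {b : OrthonormalBasis ι 𝕜 E} {T : E →ₗ[𝕜] E} {lam : ι → ℝ}

theorem re_inner_apply_self_eq_sum (hT : ∀ i, T (b i) = (lam i : 𝕜) • b i) (x : E) :
    re ⟪x, T x⟫_𝕜 = ∑ i, lam i * ‖⟪b i, x⟫_𝕜‖ ^ 2 := by
  have hTx : T x = ∑ i, (lam i * ⟪b i, x⟫_𝕜) • b i := by
    conv_lhs => rw [← b.sum_repr' x]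
    simp only [map_sum, map_smul, hT, smul_smul, mul_comm]
  rw [hTx, inner_sum, map_sum]
  refine sum_congr rfl fun i _ => ?_
  rw [inner_smul_right, ← inner_conj_symm, mul_assoc, RCLike.conj_mul, RCLike.norm_conj,
    ← ofReal_pow, ← ofReal_mul, ofReal_re]

theorem re_inner_apply_basis (hT : ∀ i, T (b i) = (lam i : 𝕜) • b i) (i : ι) :
    re ⟪b i, T (b i)⟫_𝕜 = lam i := by
  simp [hT, inner_smul_right, inner_self_eq_norm_sq_to_K, b.norm_eq_one]

theorem sum_re_inner_apply_le_sum (hT : ∀ i, T (b i) = (lam i : 𝕜) • b i) {κ : Type*}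
    [Fintype κ] {u : κ → E} (hu : Orthonormal 𝕜 u) {S : Finset ι} (hS : #S = Fintype.card κ)
    (hSmax : ∀ i ∈ S, ∀ i' ∉ S, lam i' ≤ lam i) :
    ∑ j, re ⟪u j, T (u j)⟫_𝕜 ≤ ∑ i ∈ S, lam i := by
  have hle_one : ∀ i, ∑ j, ‖⟪b i, u j⟫_𝕜‖ ^ 2 ≤ 1 := fun i => by
    simpa only [norm_inner_symm, b.norm_eq_one, one_pow] using hu.sum_inner_products_le (b i)
  have hsum : ∑ i, ∑ j, ‖⟪b i, u j⟫_𝕜‖ ^ 2 = #S := by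
    rw [sum_comm]
    simp [b.sum_sq_norm_inner_right, hu.norm_eq_one, hS]
  calc ∑ j, re ⟪u j, T (u j)⟫_𝕜 = ∑ i, lam i * ∑ j, ‖⟪b i, u j⟫_𝕜‖ ^ 2 := by
        simp only [re_inner_apply_self_eq_sum hT, mul_sum]
        exact sum_comm
    _ ≤ ∑ i ∈ S, lam i :=
        sum_mul_le_sum_of_sum_eq_card (fun i => sum_nonneg fun j _ => by positivity) hle_one hsum
          hSmax

end

section
variable {n k : ℕ} {α : Type*} [LinearOrder α]

noncomputable def topIndices (f : Fin n → α) (hkn : k ≤ n) : Fin k ↪ Fin n :=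
  (Fin.castLEEmb hkn).trans (Fin.revPerm.toEmbedding.trans (Tuple.sort f).toEmbedding)

theorem le_of_mem_map_topIndices (f : Fin n → α) (hkn : k ≤ n) :
    ∀ i ∈ univ.map (topIndices f hkn), ∀ i' ∉ univ.map (topIndices f hkn), f i' ≤ f i := by
  intro i hi i' hi'
  obtain ⟨j, -, rfl⟩ := mem_map.1 hi
  obtain ⟨q, rfl⟩ := (Tuple.sort f).surjective i'
  have hq : q ≤ (Fin.castLE hkn j).rev := by
    by_contra! h
    rw [Fin.lt_def, Fin.val_rev, Fin.val_castLE] at h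
    refine hi' (mem_map.2 ⟨⟨n - 1 - q, by omega⟩, mem_univ _, ?_⟩)
    change Tuple.sort f (Fin.castLE hkn _).rev = Tuple.sort f q
    congr 1
    ext
    simp only [Fin.val_rev, Fin.val_castLE]
    omega
  exact Tuple.monotone_sort f hq

end

namespace Matrix
variable {𝕜 m : Type*} [RCLike 𝕜] [Fintype m] [DecidableEq m]

theorem IsHermitian.toEuclideanLin_eigenvectorBasis {A : Matrix m m 𝕜} (hA : A.IsHermitian)
    (i : m) : A.toEuclideanLin (hA.eigenvectorBasis i) =
      (hA.eigenvalues i : 𝕜) • hA.eigenvectorBasis i := by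
  rw [toLpLin_apply, hA.mulVec_eigenvectorBasis, ← RCLike.real_smul_eq_coe_smul (K := 𝕜)]
  rfl

theorem inner_toEuclideanLin_right (C : Matrix m m 𝕜) (x y : EuclideanSpace 𝕜 m) :
    ⟪x, C.toEuclideanLin y⟫_𝕜 = ⟪Cᴴ.toEuclideanLin x, y⟫_𝕜 := by
  rw [toEuclideanLin_conjTranspose_eq_adjoint, LinearMap.adjoint_inner_left]

theorem inner_toEuclideanLin_mul_mul_conjTranspose (C Y : Matrix m m 𝕜)
    (x : EuclideanSpace 𝕜 m) :
    ⟪x, (C * Y * Cᴴ).toEuclideanLin x⟫_𝕜 =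
      ⟪Cᴴ.toEuclideanLin x, Y.toEuclideanLin (Cᴴ.toEuclideanLin x)⟫_𝕜 := by
  rw [toLpLin_mul_same, toLpLin_mul_same]
  exact inner_toEuclideanLin_right C x _

theorem re_inner_toEuclideanLin_le_of_posSemidef_sub {A B : Matrix m m 𝕜}
    (h : (B - A).PosSemidef) (x : EuclideanSpace 𝕜 m) :
    re ⟪x, A.toEuclideanLin x⟫_𝕜 ≤ re ⟪x, B.toEuclideanLin x⟫_𝕜 := by
  have := (isPositive_toEuclideanLin_iff.mpr h).re_inner_nonneg_right x
  rw [map_sub, LinearMap.sub_apply, inner_sub_right, map_sub] at this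
  linarith

theorem orthonormal_toEuclideanLin_comp {ι : Type*} {U : Matrix m m 𝕜}
    (hU : U ∈ unitaryGroup m 𝕜) {u : ι → EuclideanSpace 𝕜 m} (hu : Orthonormal 𝕜 u) :
    Orthonormal 𝕜 (U.toEuclideanLin ∘ u) := by
  classical
  have hUU : Uᴴ * U = 1 := by rw [← star_eq_conjTranspose]; exact hU.1
  refine orthonormal_iff_ite.2 fun i j => ?_
  rw [Function.comp_apply, Function.comp_apply, inner_toEuclideanLin_right,
    ← LinearMap.comp_apply, ← toLpLin_mul_same, hUU, toLpLin_one, LinearMap.id_apply]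
  exact orthonormal_iff_ite.1 hu i j

end Matrix

theorem eigDesc_castLE {n k : ℕ} {A : Matrix (Fin n) (Fin n) ℂ} (hA : A.IsHermitian)
    (hkn : k ≤ n) (j : Fin k) :
    eigDesc hA (Fin.castLE hkn j) = hA.eigenvalues (topIndices hA.eigenvalues hkn j) :=
  rfl

theorem sum_re_inner_toEuclideanLin_le_sum_eigDesc {n k : ℕ} {A : Matrix (Fin n) (Fin n) ℂ}
    (hA : A.IsHermitian) (hkn : k ≤ n) {u : Fin k → EuclideanSpace ℂ (Fin n)}
    (hu : Orthonormal ℂ u) :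
    ∑ j, re ⟪u j, A.toEuclideanLin (u j)⟫_ℂ ≤ ∑ j : Fin k, eigDesc hA (Fin.castLE hkn j) := by
  simp only [eigDesc_castLE, ← sum_map univ (topIndices hA.eigenvalues hkn)]
  exact sum_re_inner_apply_le_sum hA.toEuclideanLin_eigenvectorBasis hu (by simp)
    (le_of_mem_map_topIndices _ hkn)

theorem sum_eig_le_of_le_mean_unitary_conj
    {n : ℕ} (X Y : Matrix (Fin n) (Fin n) ℂ) (hX : X.IsHermitian) (hY : Y.IsHermitian)
    (U V : Matrix (Fin n) (Fin n) ℂ)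
    (hU : U ∈ Matrix.unitaryGroup (Fin n) ℂ) (hV : V ∈ Matrix.unitaryGroup (Fin n) ℂ)
    (hle : ((2 : ℝ)⁻¹ • (U * Y * Uᴴ + V * Y * Vᴴ) - X).PosSemidef)
    (k : ℕ) (hkn : k ≤ n) :
    ∑ j : Fin k, eigDesc hX (Fin.castLE hkn j) ≤
      ∑ j : Fin k, eigDesc hY (Fin.castLE hkn j) := by
  set w := fun j => hX.eigenvectorBasis (topIndices hX.eigenvalues hkn j)
  have hw : Orthonormal ℂ w :=
    hX.eigenvectorBasis.orthonormal.comp _ (topIndices hX.eigenvalues hkn).injective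
  have hconj : ∀ W ∈ unitaryGroup (Fin n) ℂ,
      ∑ j, re ⟪w j, (W * Y * Wᴴ).toEuclideanLin (w j)⟫_ℂ ≤
        ∑ j : Fin k, eigDesc hY (Fin.castLE hkn j) := fun W hW => by
    simp only [inner_toEuclideanLin_mul_mul_conjTranspose]
    exact sum_re_inner_toEuclideanLin_le_sum_eigDesc hY hkn
      (orthonormal_toEuclideanLin_comp (Unitary.star_mem hW) hw)
  calc ∑ j : Fin k, eigDesc hX (Fin.castLE hkn j)
      = ∑ j, re ⟪w j, X.toEuclideanLin (w j)⟫_ℂ := by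
        simp only [eigDesc_castLE, re_inner_apply_basis hX.toEuclideanLin_eigenvectorBasis, w]
    _ ≤ ∑ j, re ⟪w j, ((2 : ℝ)⁻¹ • (U * Y * Uᴴ + V * Y * Vᴴ)).toEuclideanLin (w j)⟫_ℂ :=
        sum_le_sum fun j _ => re_inner_toEuclideanLin_le_of_posSemidef_sub hle (w j)
    _ = 2⁻¹ * ∑ j, re ⟪w j, (U * Y * Uᴴ).toEuclideanLin (w j)⟫_ℂ
          + 2⁻¹ * ∑ j, re ⟪w j, (V * Y * Vᴴ).toEuclideanLin (w j)⟫_ℂ := by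
        simp only [RCLike.real_smul_eq_coe_smul (K := ℂ), map_smul, map_add, LinearMap.smul_apply,
          LinearMap.add_apply, inner_smul_right, inner_add_right, re_ofReal_mul, mul_add,
          sum_add_distrib, mul_sum]
    _ ≤ 2⁻¹ * ∑ j : Fin k, eigDesc hY (Fin.castLE hkn j)
          + 2⁻¹ * ∑ j : Fin k, eigDesc hY (Fin.castLE hkn j) := by
        gcongr 2⁻¹ * ?_ + 2⁻¹ * ?_
        exacts [hconj U hU, hconj V hV]
    _ = ∑ j : Fin k, eigDesc hY (Fin.castLE hkn j) := by ring
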